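/- Let G be a finite simple graph such that every vertex of G belongs to at least one clique with 3 vertices and G contains no clique with 4 vertices. Then the enemy-oriented hedonic game without neutrals whose friendship graph is G admits a strictly core stable partition if and only if the vertex set of G can be partitioned into pairwise disjoint cliques each with exactly 3 vertices (triangles). -/

import Mathlib

open scoped Classical

variable {A : Type*}

/-- Number of friends of agent `i` in coalition `S` (friendship graph `G`). -/
noncomputable def friendsIn (G : SimpleGraph A) (i : A) (S : Finset A) : ℕ :=
  (S.filter fun j => G.Adj i j).card

/-- Number of enemies of agent `i` in coalition `S`; without neutrals, an enemy
is any distinct non-adjacent agent. -/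
noncomputable def enemiesIn (G : SimpleGraph A) (i : A) (S : Finset A) : ℕ :=
  (S.filter fun j => j ≠ i ∧ ¬ G.Adj i j).card

/-- Agent `i` prefers coalition `S1` over `S2`. -/
def Prefers (G : SimpleGraph A) (i : A) (S1 S2 : Finset A) : Prop :=
  enemiesIn G i S1 < enemiesIn G i S2 ∨
    (enemiesIn G i S1 = enemiesIn G i S2 ∧ friendsIn G i S2 < friendsIn G i S1)

/-- Agent `i` weakly prefers coalition `S1` over `S2`. -/
def WeaklyPrefers (G : SimpleGraph A) (i : A) (S1 S2 : Finset A) : Prop :=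
  ¬ Prefers G i S2 S1

variable [Fintype A] [DecidableEq A]

/-- Coalition `B` blocks partition `P`. -/
def Blocks (G : SimpleGraph A) (P : Finpartition (Finset.univ : Finset A))
    (B : Finset A) : Prop :=
  B.Nonempty ∧ ∀ i ∈ B, ∀ C ∈ P.parts, i ∈ C → Prefers G i B C

/-- Coalition `B` weakly blocks partition `P`. -/
def WeaklyBlocks (G : SimpleGraph A) (P : Finpartition (Finset.univ : Finset A))
    (B : Finset A) : Prop :=
  B.Nonempty ∧ (∀ i ∈ B, ∀ C ∈ P.parts, i ∈ C → WeaklyPrefers G i B C) ∧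
    ∃ i ∈ B, ∀ C ∈ P.parts, i ∈ C → Prefers G i B C

/-- Partition `P` is core stable: no coalition blocks it. -/
def CoreStable (G : SimpleGraph A) (P : Finpartition (Finset.univ : Finset A)) : Prop :=
  ∀ B : Finset A, ¬ Blocks G P B

/-- Partition `P` is strictly core stable: no coalition weakly blocks it. -/
def StrictlyCoreStable (G : SimpleGraph A)
    (P : Finpartition (Finset.univ : Finset A)) : Prop :=
  ∀ B : Finset A, ¬ WeaklyBlocks G P B

lemma enemiesIn_eq_zero_iff (G : SimpleGraph A) (i : A) (S : Finset A) :
    enemiesIn G i S = 0 ↔ ∀ j ∈ S, j ≠ i → G.Adj i j := by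
  simp only [enemiesIn, Finset.card_eq_zero, Finset.filter_eq_empty_iff]
  constructor
  · intro h j hj hne
    by_contra hadj
    exact h hj ⟨hne, hadj⟩
  · rintro h j hj ⟨hne, hadj⟩
    exact hadj (h j hj hne)

lemma enemiesIn_of_clique (G : SimpleGraph A) {C : Finset A} (hC : G.IsClique ↑C)
    {i : A} (hi : i ∈ C) : enemiesIn G i C = 0 := by
  rw [enemiesIn_eq_zero_iff]
  intro j hj hne
  exact hC hi hj (Ne.symm hne)

lemma friendsIn_of_clique (G : SimpleGraph A) {C : Finset A} (hC : G.IsClique ↑C)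
    {i : A} (hi : i ∈ C) : friendsIn G i C = C.card - 1 := by
  have h : C.filter (fun j => G.Adj i j) = C.erase i := by
    ext j
    simp only [Finset.mem_filter, Finset.mem_erase]
    constructor
    · rintro ⟨hj, hadj⟩; exact ⟨(G.ne_of_adj hadj).symm, hj⟩
    · rintro ⟨hne, hj⟩; exact ⟨hj, hC hi hj (Ne.symm hne)⟩
  rw [friendsIn, h, Finset.card_erase_of_mem hi]

lemma clique_card_le (G : SimpleGraph A) (h4 : G.CliqueFree 4) {C : Finset A}
    (hC : G.IsClique ↑C) : C.card ≤ 3 := by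
  by_contra h
  push_neg at h
  obtain ⟨S, hS, hScard⟩ := Finset.exists_subset_card_eq (show 4 ≤ C.card from h)
  exact h4 S ⟨hC.subset (by exact_mod_cast hS), hScard⟩

lemma enemiesIn_singleton (G : SimpleGraph A) (i : A) : enemiesIn G i {i} = 0 := by
  simp [enemiesIn, Finset.filter_singleton]

lemma friendsIn_singleton (G : SimpleGraph A) (i : A) : friendsIn G i {i} = 0 := by
  simp [friendsIn, Finset.filter_singleton]

lemma parts_enemies_zero (G : SimpleGraph A) {P : Finpartition (Finset.univ : Finset A)}
    (hP : StrictlyCoreStable G P) {C : Finset A} (hC : C ∈ P.parts) {i : A} (hi : i ∈ C) :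
    enemiesIn G i C = 0 := by
  by_contra h
  apply hP {i}
  refine ⟨Finset.singleton_nonempty i, ?_, ?_⟩
  · intro j hj C' hC' hjC'
    rw [Finset.mem_singleton] at hj
    subst hj
    have hCC : C' = C := P.eq_of_mem_parts hC' hC hjC' hi
    subst hCC
    rintro (h1 | ⟨h1, _⟩)
    · rw [enemiesIn_singleton] at h1; omega
    · rw [enemiesIn_singleton] at h1; omega
  · refine ⟨i, Finset.mem_singleton_self i, ?_⟩
    intro C' hC' hiC'
    have hCC : C' = C := P.eq_of_mem_parts hC' hC hiC' hi
    subst hCC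
    left
    rw [enemiesIn_singleton]
    omega

lemma part_is_clique (G : SimpleGraph A) {P : Finpartition (Finset.univ : Finset A)}
    (hP : StrictlyCoreStable G P) {C : Finset A} (hC : C ∈ P.parts) :
    G.IsClique ↑C := by
  intro x hx y hy hxy
  have h := parts_enemies_zero G hP hC (Finset.mem_coe.mp hx)
  rw [enemiesIn_eq_zero_iff] at h
  exact h y (Finset.mem_coe.mp hy) (Ne.symm hxy)

/-- If every vertex of the friendship graph `G` lies in some clique with 3
vertices and `G` has no clique with 4 vertices, then the associated enemy-oriented
hedonic game without neutrals admits a strictly core stable partition iff the vertex set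
of `G` can be partitioned into pairwise disjoint triangles. -/
theorem stmt_15 [Nonempty A] (G : SimpleGraph A)
    (h3 : ∀ v : A, ∃ D : Finset A, v ∈ D ∧ G.IsNClique 3 D)
    (h4 : G.CliqueFree 4) :
    (∃ P : Finpartition (Finset.univ : Finset A), StrictlyCoreStable G P) ↔
      ∃ Q : Finset (Finset A), (∀ D ∈ Q, G.IsNClique 3 D) ∧
        (Q : Set (Finset A)).PairwiseDisjoint id ∧
        Q.biUnion id = Finset.univ := by
  constructor
  · rintro ⟨P, hP⟩
    refine ⟨P.parts, ?_, P.supIndep.pairwiseDisjoint, P.biUnion_parts⟩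
    intro C hC
    have hclique : G.IsClique ↑C := part_is_clique G hP hC
    obtain ⟨v, hv⟩ := P.nonempty_of_mem_parts hC
    obtain ⟨D, hvD, hD⟩ := h3 v
    have hDclique : G.IsClique ↑D := hD.isClique
    have hDcard : D.card = 3 := hD.card_eq
    have hnb := hP D
    rw [WeaklyBlocks] at hnb
    push_neg at hnb
    have hweak : ∀ i ∈ D, ∀ C' ∈ P.parts, i ∈ C' → WeaklyPrefers G i D C' := by
      intro i hi C' hC' hiC'
      have heD : enemiesIn G i D = 0 := enemiesIn_of_clique G hDclique hi
      have hfD : friendsIn G i D = 2 := by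
        rw [friendsIn_of_clique G hDclique hi, hDcard]
      have heC : enemiesIn G i C' = 0 := parts_enemies_zero G hP hC' hiC'
      have hfC : friendsIn G i C' = C'.card - 1 :=
        friendsIn_of_clique G (part_is_clique G hP hC') hiC'
      have hcard : C'.card ≤ 3 := clique_card_le G h4 (part_is_clique G hP hC')
      rintro (h1 | ⟨h1, h2⟩) <;> omega
    have hDne : D.Nonempty := ⟨v, hvD⟩
    have hstr := hnb hDne hweak
    · skip
      obtain ⟨C', hC', hvC', hnp⟩ := hstr v hvD
      have hCC : C' = C := P.eq_of_mem_parts hC' hC hvC' hv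
      subst hCC
      rw [Prefers] at hnp
      push_neg at hnp
      have heD : enemiesIn G v D = 0 := enemiesIn_of_clique G hDclique hvD
      have hfD : friendsIn G v D = 2 := by
        rw [friendsIn_of_clique G hDclique hvD, hDcard]
      have heC : enemiesIn G v C' = 0 := parts_enemies_zero G hP hC' hv
      have hfC : friendsIn G v C' = C'.card - 1 := friendsIn_of_clique G hclique hv
      have hcard : C'.card ≤ 3 := clique_card_le G h4 hclique
      refine ⟨hclique, ?_⟩
      have := hnp.2 (by omega)
      omega
  · rintro ⟨Q, hQ3, hQdisj, hQun⟩
    refine ⟨⟨Q, Finset.supIndep_iff_pairwiseDisjoint.mpr hQdisj,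
      by rw [Finset.sup_eq_biUnion]; exact hQun, ?_⟩, ?_⟩
    · intro hbot
      have := (hQ3 ⊥ hbot).card_eq
      simp at this
    · rintro B ⟨hBne, hweak, i0, hi0, hstrict⟩
      have key : ∀ i ∈ B, enemiesIn G i B = 0 ∧ 2 ≤ friendsIn G i B := by
        intro i hi
        have hiu : i ∈ Q.biUnion id := by rw [hQun]; exact Finset.mem_univ i
        obtain ⟨D, hD, hiD⟩ := Finset.mem_biUnion.mp hiu
        have hDclique : G.IsClique ↑D := (hQ3 D hD).isClique
        have heD : enemiesIn G i D = 0 := enemiesIn_of_clique G hDclique hiD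
        have hfD : friendsIn G i D = 2 := by
          rw [friendsIn_of_clique G hDclique hiD, (hQ3 D hD).card_eq]
        have hw := hweak i hi D hD hiD
        rw [WeaklyPrefers, Prefers] at hw
        push_neg at hw
        omega
      have hBclique : G.IsClique ↑B := by
        intro x hx y hy hxy
        have h := (key x (Finset.mem_coe.mp hx)).1
        rw [enemiesIn_eq_zero_iff] at h
        exact h y (Finset.mem_coe.mp hy) (Ne.symm hxy)
      have hBcard : B.card ≤ 3 := clique_card_le G h4 hBclique
      obtain ⟨D, hD, hiD⟩ := Finset.mem_biUnion.mp
        (by rw [hQun]; exact Finset.mem_univ i0 : i0 ∈ Q.biUnion id)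
      have hDclique : G.IsClique ↑D := (hQ3 D hD).isClique
      have heD : enemiesIn G i0 D = 0 := enemiesIn_of_clique G hDclique hiD
      have hfD : friendsIn G i0 D = 2 := by
        rw [friendsIn_of_clique G hDclique hiD, (hQ3 D hD).card_eq]
      have hp := hstrict D hD hiD
      rw [Prefers] at hp
      have h0 := key i0 hi0
      have hfB : friendsIn G i0 B = B.card - 1 := friendsIn_of_clique G hBclique hi0
      omega
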